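/- Disjoint self-replication (from the proof of Lemma 4.2, 'lem:selfReplication'): Fix L > 0 and r ∈ [0,1) with (1−r)² < 1/2. Define F_r(y,x,z,w) = (y·(1−r)³ + L·r/2, x·(1−r)², z·(1−r), w·(1−r)) and G_r(y,x,z,w) = (y·(1−r)³ + L/2, x·(1−r)², z·(1−r), w·(1−r)). Then: (a) G_r is injective and maps [0,L] × D³ into [0,L] × D³ (where D³ is the closed unit ball in the (x,z,w)-coordinates); (b) DG_r(W(p)) = (1−r)·W(G_r(p)) and DG_r(X(p)) = (1−r)·X(G_r(p)) for every p, so G_r is an Engel embedding of ([0,L] × D³, D_trans) into itself; (c) the images F_r([0,L] × D³) and G_r([0,L] × D³) are disjoint. -/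
import Mathlib


open Set

/-- The vector field `W = ∂_w` on ℝ⁴ with coordinates `(y,x,z,w)`. -/
def Wfield : (Fin 4 → ℝ) → (Fin 4 → ℝ) := fun _ => ![0, 0, 0, 1]

/-- The vector field `X = ∂_z + w∂_x + wz∂_y`, i.e. `(wz, w, 1, 0)`. -/
def Xfield : (Fin 4 → ℝ) → (Fin 4 → ℝ) := fun p => ![p 3 * p 2, p 3, 1, 0]

/-- `F_r(y,x,z,w) = (y(1−r)³ + Lr/2, x(1−r)², z(1−r), w(1−r))`. -/
noncomputable def Fmap (L r : ℝ) : (Fin 4 → ℝ) → (Fin 4 → ℝ) :=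
  fun p => ![p 0 * (1 - r) ^ 3 + L * r / 2, p 1 * (1 - r) ^ 2,
    p 2 * (1 - r), p 3 * (1 - r)]

/-- `G_r(y,x,z,w) = (y(1−r)³ + L/2, x(1−r)², z(1−r), w(1−r))`. -/
noncomputable def Gmap (L r : ℝ) : (Fin 4 → ℝ) → (Fin 4 → ℝ) :=
  fun p => ![p 0 * (1 - r) ^ 3 + L / 2, p 1 * (1 - r) ^ 2,
    p 2 * (1 - r), p 3 * (1 - r)]

/-- The domain `[0,L] × D³`, `D³` the closed unit ball in the `(x,z,w)`-coordinates. -/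
def Box (L : ℝ) : Set (Fin 4 → ℝ) :=
  {p | p 0 ∈ Icc 0 L ∧ (p 1) ^ 2 + (p 2) ^ 2 + (p 3) ^ 2 ≤ 1}

/-- The linear part of `Gmap` as a continuous linear map. -/
noncomputable def Gclm (r : ℝ) : (Fin 4 → ℝ) →L[ℝ] (Fin 4 → ℝ) :=
  ContinuousLinearMap.pi
    ![(1 - r) ^ 3 • ContinuousLinearMap.proj 0,
      (1 - r) ^ 2 • ContinuousLinearMap.proj 1,
      (1 - r) • ContinuousLinearMap.proj 2,
      (1 - r) • ContinuousLinearMap.proj 3]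

lemma Gclm_apply (r : ℝ) (v : Fin 4 → ℝ) :
    Gclm r v = ![(1 - r) ^ 3 * v 0, (1 - r) ^ 2 * v 1, (1 - r) * v 2, (1 - r) * v 3] := by
  funext i
  fin_cases i <;>
    simp [Gclm, ContinuousLinearMap.pi_apply]

lemma hasFDerivAt_Gmap (L r : ℝ) (p : Fin 4 → ℝ) :
    HasFDerivAt (Gmap L r) (Gclm r) p := by
  have h : Gmap L r = fun q => (![L / 2, 0, 0, 0] : Fin 4 → ℝ) + Gclm r q := by
    funext q i
    rw [Gclm_apply]
    fin_cases i <;> simp [Gmap] <;> ring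
  rw [h]
  exact (Gclm r).hasFDerivAt.const_add _

/-- Disjoint self-replication (from the proof of Lemma 4.2, `lem:selfReplication`):
for `L > 0` and `r ∈ [0,1)` with `(1−r)² < 1/2`:
(a) `G_r` is injective and maps `[0,L] × D³` into itself;
(b) `DG_r` carries `W` and `X` to `(1−r)·W` and `(1−r)·X`, so `G_r` is an Engel
embedding of `([0,L] × D³, D_trans)` into itself;
(c) the images `F_r([0,L] × D³)` and `G_r([0,L] × D³)` are disjoint. -/
theorem selfReplication_disjoint (L r : ℝ) (hL : 0 < L)
    (hr : r ∈ Ico (0:ℝ) 1) (hsmall : (1 - r) ^ 2 < 1 / 2) :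
    (Function.Injective (Gmap L r) ∧ ∀ p ∈ Box L, Gmap L r p ∈ Box L) ∧
    (∀ p : Fin 4 → ℝ,
      fderiv ℝ (Gmap L r) p (Wfield p) = (1 - r) • Wfield (Gmap L r p) ∧
      fderiv ℝ (Gmap L r) p (Xfield p) = (1 - r) • Xfield (Gmap L r p)) ∧
    (Fmap L r '' Box L) ∩ (Gmap L r '' Box L) = ∅ := by
  obtain ⟨hr0, hr1⟩ := hr
  have ha : 0 < 1 - r := by linarith
  have ha1 : 1 - r ≤ 1 := by linarith
  refine ⟨⟨?_, ?_⟩, ?_, ?_⟩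
  · -- injectivity
    intro p q h
    have h0 := congrFun h 0
    have h1 := congrFun h 1
    have h2 := congrFun h 2
    have h3 := congrFun h 3
    simp [Gmap] at h0 h1 h2 h3
    have e0 : p 0 = q 0 := h0.resolve_right ha.ne'
    have e1 : p 1 = q 1 := h1.resolve_right ha.ne'
    have e2 : p 2 = q 2 := h2.resolve_right ha.ne'
    have e3 : p 3 = q 3 := h3.resolve_right ha.ne'
    funext i
    fin_cases i <;> assumption
  · -- maps Box into Box
    intro p hp
    obtain ⟨⟨hp0, hp0'⟩, hpb⟩ := hp
    have ha2 : (1-r)^2 ≤ 1 := by nlinarith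
    have ha3 : (1-r)^3 < 1/2 := by nlinarith [pow_nonneg ha.le 2]
    have hc3 : 0 ≤ (1-r)^3 := pow_nonneg ha.le 3
    constructor
    · constructor
      · show 0 ≤ p 0 * (1-r)^3 + L/2
        nlinarith [mul_nonneg hp0 hc3]
      · show p 0 * (1-r)^3 + L/2 ≤ L
        nlinarith [mul_le_mul_of_nonneg_right hp0' hc3, mul_lt_mul_of_pos_left ha3 hL]
    · show (p 1 * (1-r)^2)^2 + (p 2 * (1-r))^2 + (p 3 * (1-r))^2 ≤ 1
      have h4 : ((1-r)^2)^2 ≤ 1 := by nlinarith [sq_nonneg (1-r)]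
      have h1 : (p 1 * (1-r)^2)^2 ≤ (p 1)^2 := by
        nlinarith [mul_le_mul_of_nonneg_left h4 (sq_nonneg (p 1))]
      have h2 : (p 2 * (1-r))^2 ≤ (p 2)^2 := by
        nlinarith [mul_le_mul_of_nonneg_left ha2 (sq_nonneg (p 2))]
      have h3 : (p 3 * (1-r))^2 ≤ (p 3)^2 := by
        nlinarith [mul_le_mul_of_nonneg_left ha2 (sq_nonneg (p 3))]
      linarith
  · -- derivative
    intro p
    rw [(hasFDerivAt_Gmap L r p).fderiv]
    constructor
    · rw [Gclm_apply]
      funext i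
      fin_cases i <;> simp [Wfield]
    · rw [Gclm_apply]
      funext i
      fin_cases i <;> simp [Xfield, Gmap] <;> ring
  · -- disjoint images
    ext v
    simp only [mem_inter_iff, mem_image, mem_empty_iff_false, iff_false]
    rintro ⟨⟨p, ⟨⟨hp0, hp0'⟩, -⟩, hpv⟩, ⟨q, ⟨⟨hq0, -⟩, -⟩, hqv⟩⟩
    have h1 := congrFun hpv 0
    have h2 := congrFun hqv 0
    simp [Fmap, Gmap] at h1 h2
    have key : (1-r)^3 < (1-r)/2 := by nlinarith
    nlinarith [mul_le_mul_of_nonneg_right hp0' (pow_nonneg ha.le 3),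
      mul_nonneg hq0 (pow_nonneg ha.le 3), mul_lt_mul_of_pos_left key hL]
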